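/- Let ν, ζ ∈ ℝ, σ > 0, T > 0, and let h : ℝ → ℝ be continuous. Suppose W₁, W₂ : (0,∞) × [0,T] → ℝ are continuous, are differentiable in t and twice differentiable in x on (0,∞) × (0,T), both satisfy the risk-subjective PDE ∂W/∂t + (1/2)σ²x² ∂²W/∂x² + (ν − ζ)x ∂W/∂x = νW there, satisfy the same terminal condition W₁(x,T) = W₂(x,T) = h(x) for all x > 0, and obey the growth bound |Wᵢ(x,t)| ≤ C(1 + x^k + x^{−k}) for some C > 0, k ∈ ℕ and all (x,t) ∈ (0,∞) × [0,T]. Then W₁ = W₂ on (0,∞) × [0,T]. -/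

import Mathlib

/-!
The difference `u = W₁ - W₂` solves the same linear PDE, vanishes at `t = T` and grows at most
polynomially in `x` and `1/x`, so it suffices to show that such a `u` is `≤ 0` and to apply this to
`±u`. Multiplying by `exp (ν (T - t))` removes the zeroth-order term. For `m = k + 1`, the barrier
`exp (L (T - t)) (x^m + x^{-m})` is a strict supersolution as soon as `L` exceeds the bound
`σ²m(m+1)/2 + |ν - ζ| m` of the Euler operator `½σ²x²∂ₓ² + (ν - ζ)x∂ₓ` on `x^m + x^{-m}`, and
it dominates `u` near `x = 0` and `x = ∞`. Hence `u - ε · barrier` attains its maximum over a box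
`[R⁻¹, R] × [t, T]` on the parabolic boundary, where it is `≤ 0`; let `ε → 0`. The slice `t = 0`
follows by continuity.
-/

open Real MeasureTheory Set

/-- `W` solves the risk-subjective PDE
`∂W/∂t + (1/2)σ²x² ∂²W/∂x² + (ν − ζ)x ∂W/∂x = νW` on `(0,∞) × (0,T)`,
being differentiable in `t` and twice differentiable in `x` there. -/
def SolvesRiskSubjPDE (ν ζ σ T : ℝ) (W : ℝ → ℝ → ℝ) : Prop :=
  ∀ x t : ℝ, 0 < x → 0 < t → t < T →
    ∃ Wt Wx Wxx : ℝ,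
      HasDerivAt (fun s : ℝ => W x s) Wt t ∧
      HasDerivAt (fun y : ℝ => W y t) Wx x ∧
      HasDerivAt (deriv fun y : ℝ => W y t) Wxx x ∧
      Wt + (1 / 2) * σ ^ 2 * x ^ 2 * Wxx + (ν - ζ) * x * Wx = ν * W x t

open Filter Topology

theorem IsMaxOn.hasDerivAt_nonpos_of_Icc_left {f : ℝ → ℝ} {a b f' : ℝ} (hab : a < b)
    (hmax : IsMaxOn f (Icc a b) a) (hf : HasDerivAt f f' a) : f' ≤ 0 := by
  have hcone : b - a ∈ posTangentConeAt (Icc a b) a :=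
    sub_mem_posTangentConeAt_of_segment_subset (segment_eq_Icc hab.le).subset
  have h := hmax.localize.hasFDerivWithinAt_nonpos hf.hasDerivWithinAt hcone
  rw [ContinuousLinearMap.toSpanSingleton_apply, smul_eq_mul] at h
  exact nonpos_of_mul_nonpos_right h (sub_pos.2 hab)

theorem IsLocalMax.deriv_deriv_nonpos {f : ℝ → ℝ} {a : ℝ} (hmax : IsLocalMax f a)
    (hf : ContinuousAt f a) : deriv (deriv f) a ≤ 0 := by
  by_contra! hpos
  have hmin := isLocalMin_of_deriv_deriv_pos hpos hmax.deriv_eq_zero hf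
  have hconst : f =ᶠ[𝓝 a] fun _ => f a :=
    (hmax.and hmin).mono fun _ hy => le_antisymm hy.1 hy.2
  simp [hconst.deriv.deriv_eq] at hpos

theorem hasDerivAt_deriv_sub {f g : ℝ → ℝ} {x f'' g'' : ℝ}
    (hf : ∀ᶠ y in 𝓝 x, DifferentiableAt ℝ f y) (hg : ∀ᶠ y in 𝓝 x, DifferentiableAt ℝ g y)
    (hf' : HasDerivAt (deriv f) f'' x) (hg' : HasDerivAt (deriv g) g'' x) :
    HasDerivAt (deriv fun y => f y - g y) (f'' - g'') x :=
  (hf'.sub hg').congr_of_eventuallyEq ((hf.and hg).mono fun _ hy => deriv_fun_sub hy.1 hy.2)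

theorem IsMaxOn.euler_parabolic_nonpos {v : ℝ → ℝ → ℝ} {a b t₀ t₁ x₀ vt vx vxx A : ℝ}
    (B : ℝ) (hA : 0 ≤ A) (hx₀ : x₀ ∈ Ioo a b) (ht₀ : t₀ < t₁)
    (hmax : IsMaxOn (fun p : ℝ × ℝ => v p.1 p.2) (Icc a b ×ˢ Icc t₀ t₁) (x₀, t₀))
    (hvt : HasDerivAt (fun s => v x₀ s) vt t₀) (hvx : HasDerivAt (fun y => v y t₀) vx x₀)
    (hvxx : HasDerivAt (deriv fun y => v y t₀) vxx x₀) :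
    vt + A * x₀ ^ 2 * vxx + B * x₀ * vx ≤ 0 := by
  have hvt_nonpos : vt ≤ 0 :=
    IsMaxOn.hasDerivAt_nonpos_of_Icc_left ht₀ (fun s hs => hmax ⟨Ioo_subset_Icc_self hx₀, hs⟩) hvt
  have hloc : IsLocalMax (fun y => v y t₀) x₀ :=
    IsMaxOn.isLocalMax (s := Icc a b)
      (fun y hy => hmax (show (y, t₀) ∈ _ from ⟨hy, left_mem_Icc.2 ht₀.le⟩))
      (Icc_mem_nhds hx₀.1 hx₀.2)
  have hvx_zero : vx = 0 := hloc.hasDerivAt_eq_zero hvx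
  have hvxx_nonpos : vxx ≤ 0 := hvxx.deriv ▸ hloc.deriv_deriv_nonpos hvx.continuousAt
  have := mul_nonpos_of_nonneg_of_nonpos (mul_nonneg hA (sq_nonneg x₀)) hvxx_nonpos
  rw [hvx_zero]
  linarith

theorem SolvesRiskSubjPDE.eventually_differentiableAt {ν ζ σ T x t : ℝ} {W : ℝ → ℝ → ℝ}
    (hpde : SolvesRiskSubjPDE ν ζ σ T W) (hx : 0 < x) (ht : 0 < t) (htT : t < T) :
    ∀ᶠ y in 𝓝 x, DifferentiableAt ℝ (fun y => W y t) y := by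
  filter_upwards [Ioi_mem_nhds hx] with y hy
  obtain ⟨_, _, _, _, hWx, _, _⟩ := hpde y t hy ht htT
  exact hWx.differentiableAt

theorem SolvesRiskSubjPDE.sub {ν ζ σ T : ℝ} {W₁ W₂ : ℝ → ℝ → ℝ}
    (h₁ : SolvesRiskSubjPDE ν ζ σ T W₁) (h₂ : SolvesRiskSubjPDE ν ζ σ T W₂) :
    SolvesRiskSubjPDE ν ζ σ T (fun x t => W₁ x t - W₂ x t) := by
  intro x t hx ht htT
  obtain ⟨At, Ax, Axx, h1t, h1x, h1xx, h1e⟩ := h₁ x t hx ht htT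
  obtain ⟨Bt, Bx, Bxx, h2t, h2x, h2xx, h2e⟩ := h₂ x t hx ht htT
  refine ⟨At - Bt, Ax - Bx, Axx - Bxx, h1t.sub h2t, h1x.sub h2x, ?_,
    by linear_combination h1e - h2e⟩
  exact hasDerivAt_deriv_sub (h₁.eventually_differentiableAt hx ht htT)
    (h₂.eventually_differentiableAt hx ht htT) h1xx h2xx

theorem SolvesRiskSubjPDE.discount {ν ζ σ T : ℝ} {u : ℝ → ℝ → ℝ}
    (hpde : SolvesRiskSubjPDE ν ζ σ T u) :
    SolvesRiskSubjPDE 0 (ζ - ν) σ T (fun x t => exp (ν * (T - t)) * u x t) := by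
  intro x t hx ht htT
  obtain ⟨ut, ux, uxx, hut, hux, huxx, heq⟩ := hpde x t hx ht htT
  set E := exp (ν * (T - t))
  have hE : HasDerivAt (fun s => exp (ν * (T - s))) (E * -ν) t := by
    simpa using (((hasDerivAt_id t).const_sub T).const_mul ν).exp
  refine ⟨E * ut - ν * E * u x t, E * ux, E * uxx, ?_, hux.const_mul E, ?_, ?_⟩
  · exact (hE.mul hut).congr_deriv (by ring)
  · rw [deriv_const_mul_field']
    exact huxx.const_mul E
  · linear_combination E * heq

noncomputable def powerBarrier (m : ℕ) (y : ℝ) : ℝ := y ^ m + y⁻¹ ^ m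

theorem powerBarrier_pos (m : ℕ) {y : ℝ} (hy : 0 < y) : 0 < powerBarrier m y := by
  unfold powerBarrier; positivity

theorem continuousOn_powerBarrier (m : ℕ) : ContinuousOn (powerBarrier m) {0}ᶜ :=
  (continuousOn_id.pow m).add ((continuousOn_inv₀.mono fun _ h => h).pow m)

theorem powerBarrier_eq_zpow (m : ℕ) :
    powerBarrier m = fun y => y ^ (m : ℤ) + y ^ (-(m : ℤ)) := by
  ext y
  simp [powerBarrier, zpow_neg, inv_pow]

theorem hasDerivAt_powerBarrier (m : ℕ) {x : ℝ} (hx : x ≠ 0) :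
    HasDerivAt (powerBarrier m) (m * x ^ ((m : ℤ) - 1) - m * x ^ (-(m : ℤ) - 1)) x := by
  rw [powerBarrier_eq_zpow]
  refine ((hasDerivAt_zpow (m : ℤ) x (Or.inl hx)).fun_add
    (hasDerivAt_zpow (-(m : ℤ)) x (Or.inl hx))).congr_deriv ?_
  push_cast; ring

theorem hasDerivAt_deriv_powerBarrier (m : ℕ) {x : ℝ} (hx : x ≠ 0) :
    HasDerivAt (deriv (powerBarrier m))
      (m * (m - 1) * x ^ ((m : ℤ) - 2) + m * (m + 1) * x ^ (-(m : ℤ) - 2)) x := by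
  have hderiv : deriv (powerBarrier m) =ᶠ[𝓝 x]
      fun y => m * y ^ ((m : ℤ) - 1) - m * y ^ (-(m : ℤ) - 1) := by
    filter_upwards [isOpen_ne.mem_nhds hx] with y hy
    exact (hasDerivAt_powerBarrier m hy).deriv
  refine HasDerivAt.congr_of_eventuallyEq ?_ hderiv
  refine (((hasDerivAt_zpow ((m : ℤ) - 1) x (Or.inl hx)).const_mul (m : ℝ)).fun_sub
    ((hasDerivAt_zpow (-(m : ℤ) - 1) x (Or.inl hx)).const_mul (m : ℝ))).congr_deriv ?_
  rw [show (m : ℤ) - 1 - 1 = (m : ℤ) - 2 by ring, show -(m : ℤ) - 1 - 1 = -(m : ℤ) - 2 by ring]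
  push_cast; ring

theorem differentiableAt_powerBarrier (m : ℕ) {x : ℝ} (hx : x ≠ 0) :
    DifferentiableAt ℝ (powerBarrier m) x :=
  (hasDerivAt_powerBarrier m hx).differentiableAt

theorem differentiableAt_deriv_powerBarrier (m : ℕ) {x : ℝ} (hx : x ≠ 0) :
    DifferentiableAt ℝ (deriv (powerBarrier m)) x :=
  (hasDerivAt_deriv_powerBarrier m hx).differentiableAt

theorem euler_powerBarrier_le {A : ℝ} (B : ℝ) (hA : 0 ≤ A) (m : ℕ) {x : ℝ} (hx : 0 < x) :
    A * x ^ 2 * deriv (deriv (powerBarrier m)) x + B * x * deriv (powerBarrier m) x ≤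
      (A * m * (m + 1) + |B| * m) * powerBarrier m x := by
  rw [(hasDerivAt_powerBarrier m hx.ne').deriv, (hasDerivAt_deriv_powerBarrier m hx.ne').deriv,
    powerBarrier_eq_zpow]
  have hx2 : x ^ 2 = x ^ (2 : ℤ) := (zpow_natCast x 2).symm
  simp only [zpow_sub₀ hx.ne', zpow_one, hx2]
  set p := x ^ (m : ℤ)
  set q := x ^ (-(m : ℤ))
  have hp : 0 < p := zpow_pos hx _
  have hq : 0 < q := zpow_pos hx _
  field_simp
  rw [mul_assoc]
  refine mul_le_mul_of_nonneg_left ?_ (Nat.cast_nonneg m)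
  nlinarith [mul_le_mul_of_nonneg_right (le_abs_self B) hp.le,
    mul_le_mul_of_nonneg_right (neg_abs_le B) hq.le, mul_nonneg hA hp.le]

theorem le_barrier_of_abs_le {D ε L T s y v : ℝ} (k : ℕ) (hy : 0 < y) (hD : 0 ≤ D)
    (hL : 0 ≤ L) (hs : s ≤ T) (hR : 3 * D ≤ ε * max y y⁻¹)
    (hv : |v| ≤ D * (1 + y ^ k + y⁻¹ ^ k)) :
    v ≤ ε * (exp (L * (T - s)) * powerBarrier (k + 1) y) := by
  set R := max y y⁻¹
  have hR1 : 1 ≤ R := by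
    rcases le_total 1 y with h | h
    · exact h.trans (le_max_left _ _)
    · exact (one_le_inv₀ hy).2 h |>.trans (le_max_right _ _)
  have hε : 0 ≤ ε := by nlinarith
  have hsum : 1 + y ^ k + y⁻¹ ^ k ≤ 3 * R ^ k := by
    have h1 : y ^ k ≤ R ^ k := pow_le_pow_left₀ hy.le (le_max_left _ _) k
    have h2 : y⁻¹ ^ k ≤ R ^ k := pow_le_pow_left₀ (inv_pos.2 hy).le (le_max_right _ _) k
    linarith [one_le_pow₀ (n := k) hR1]
  have hbarrier : R ^ (k + 1) ≤ powerBarrier (k + 1) y := by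
    unfold powerBarrier
    rcases max_choice y y⁻¹ with h | h <;> simp only [R, h]
    · linarith [pow_pos (inv_pos.2 hy) (k + 1)]
    · linarith [pow_pos hy (k + 1)]
  have hexp : 1 ≤ exp (L * (T - s)) := one_le_exp (mul_nonneg hL (sub_nonneg.2 hs))
  calc v ≤ D * (1 + y ^ k + y⁻¹ ^ k) := (le_abs_self v).trans hv
    _ ≤ D * (3 * R ^ k) := mul_le_mul_of_nonneg_left hsum hD
    _ = 3 * D * R ^ k := by ring
    _ ≤ ε * R * R ^ k := mul_le_mul_of_nonneg_right hR (by positivity)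
    _ = ε * R ^ (k + 1) := by ring
    _ ≤ ε * powerBarrier (k + 1) y := mul_le_mul_of_nonneg_left hbarrier hε
    _ ≤ ε * (exp (L * (T - s)) * powerBarrier (k + 1) y) :=
      mul_le_mul_of_nonneg_left (le_mul_of_one_le_left (powerBarrier_pos _ hy).le hexp) hε

theorem SolvesRiskSubjPDE.not_isMaxOn_sub_barrier {ζ σ T L ε a b t₀ x₀ : ℝ} {m : ℕ}
    {u : ℝ → ℝ → ℝ} (hpde : SolvesRiskSubjPDE 0 ζ σ T u)
    (hL : 1 / 2 * σ ^ 2 * m * (m + 1) + |ζ| * m + 1 ≤ L) (hε : 0 < ε) (ha : 0 ≤ a)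
    (hx₀ : x₀ ∈ Ioo a b) (ht₀ : 0 < t₀) (ht₀T : t₀ < T) :
    ¬ IsMaxOn (fun p : ℝ × ℝ => u p.1 p.2 - ε * (exp (L * (T - p.2)) * powerBarrier m p.1))
      (Icc a b ×ˢ Icc t₀ T) (x₀, t₀) := by
  intro hmax
  have hx₀pos : 0 < x₀ := ha.trans_lt hx₀.1
  obtain ⟨ut, ux, uxx, hut, hux, huxx, hpde₀⟩ := hpde x₀ t₀ hx₀pos ht₀ ht₀T
  set g := powerBarrier m
  set E := exp (L * (T - t₀))
  have hbt : HasDerivAt (fun s => ε * (exp (L * (T - s)) * g x₀)) (ε * (E * -L * g x₀)) t₀ := by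
    refine (HasDerivAt.mul_const ?_ _).const_mul ε
    simpa using (((hasDerivAt_id t₀).const_sub T).const_mul L).exp
  have hbx : HasDerivAt (fun y => ε * (E * g y)) (ε * (E * deriv g x₀)) x₀ :=
    ((differentiableAt_powerBarrier m hx₀pos.ne').hasDerivAt.const_mul E).const_mul ε
  have hbxx : HasDerivAt (deriv fun y => ε * (E * g y)) (ε * (E * deriv (deriv g) x₀)) x₀ := by
    simp only [deriv_const_mul_field']
    exact ((differentiableAt_deriv_powerBarrier m hx₀pos.ne').hasDerivAt.const_mul E).const_mul ε
  have hb_diff : ∀ᶠ y in 𝓝 x₀, DifferentiableAt ℝ (fun y => ε * (E * g y)) y := by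
    filter_upwards [Ioi_mem_nhds hx₀pos] with y hy
    exact ((differentiableAt_powerBarrier m (ne_of_gt hy)).const_mul E).const_mul ε
  have hmax_op := hmax.euler_parabolic_nonpos (0 - ζ) (A := 1 / 2 * σ ^ 2)
    (v := fun y s => u y s - ε * (exp (L * (T - s)) * g y)) (by positivity) hx₀
    ht₀T (hut.fun_sub hbt) (hux.fun_sub hbx)
    (hasDerivAt_deriv_sub (hpde.eventually_differentiableAt hx₀pos ht₀ ht₀T) hb_diff huxx hbxx)
  have heuler := euler_powerBarrier_le (0 - ζ) (A := 1 / 2 * σ ^ 2) (by positivity) m hx₀pos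
  rw [zero_sub, abs_neg] at heuler
  have hg : 0 < g x₀ := powerBarrier_pos m hx₀pos
  -- by the PDE for `u`, `hmax_op` says `ε * E * (L * g - (Euler operator) g) ≤ 0` at `x₀`
  have hgap : 0 < ε * E * (L * g x₀ - (1 / 2 * σ ^ 2 * x₀ ^ 2 * deriv (deriv g) x₀
      + (0 - ζ) * x₀ * deriv g x₀)) := by
    refine mul_pos (mul_pos hε (exp_pos _)) ?_
    linarith [mul_le_mul_of_nonneg_right hL hg.le]
  linarith

theorem SolvesRiskSubjPDE.le_barrier_of_terminal_nonpos {ζ σ T D L ε x t : ℝ} {k : ℕ}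
    {u : ℝ → ℝ → ℝ} (hpde : SolvesRiskSubjPDE 0 ζ σ T u)
    (hcont : ContinuousOn (fun p : ℝ × ℝ => u p.1 p.2) (Ioi 0 ×ˢ Icc 0 T))
    (hterm : ∀ x, 0 < x → u x T ≤ 0)
    (hgrowth : ∀ x t, 0 < x → t ∈ Icc 0 T → |u x t| ≤ D * (1 + x ^ k + x⁻¹ ^ k)) (hD : 0 ≤ D)
    (hL : 1 / 2 * σ ^ 2 * ↑(k + 1) * (↑(k + 1) + 1) + |ζ| * ↑(k + 1) + 1 ≤ L) (hε : 0 < ε)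
    (hx : 0 < x) (ht : 0 < t) (htT : t ≤ T) :
    u x t ≤ ε * (exp (L * (T - t)) * powerBarrier (k + 1) x) := by
  have hL₀ : 0 ≤ L := le_trans (by positivity) hL
  set w := fun p : ℝ × ℝ => u p.1 p.2 - ε * (exp (L * (T - p.2)) * powerBarrier (k + 1) p.1)
  -- `(x, t)` lies inside the box `[R⁻¹, R] × [t, T]`, and the barrier dominates `u` on its sides
  set R := max (max x x⁻¹) (3 * D / ε) + 1
  have hxR : max x x⁻¹ < R := by linarith [le_max_left (max x x⁻¹) (3 * D / ε)]
  have hDR : 3 * D ≤ ε * R := by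
    rw [← div_le_iff₀' hε]; linarith [le_max_right (max x x⁻¹) (3 * D / ε)]
  have hR1 : 1 < R := by linarith [le_max_left (max x x⁻¹) (3 * D / ε), le_max_left x x⁻¹]
  set K := Icc R⁻¹ R ×ˢ Icc t T
  have hxK : (x, t) ∈ K :=
    ⟨⟨(inv_le_comm₀ (by linarith) hx).2 ((le_max_right x x⁻¹).trans hxR.le),
      (le_max_left x x⁻¹).trans hxR.le⟩, le_rfl, htT⟩
  have hK : K ⊆ Ioi 0 ×ˢ Icc 0 T := fun p hp =>
    ⟨(inv_pos.2 (by linarith)).trans_le hp.1.1, ht.le.trans hp.2.1, hp.2.2⟩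
  have hwcont : ContinuousOn w K := by
    refine (hcont.mono hK).sub (continuousOn_const.mul ((by fun_prop : Continuous
      fun p : ℝ × ℝ => exp (L * (T - p.2))).continuousOn.mul ?_))
    exact (continuousOn_powerBarrier _).comp continuousOn_fst fun p hp => (hK hp).1.ne'
  obtain ⟨⟨x₀, t₀⟩, hp₀, hmax⟩ := (isCompact_Icc.prod isCompact_Icc).exists_isMaxOn ⟨_, hxK⟩ hwcont
  have hx₀ : 0 < x₀ := (hK hp₀).1
  have ht₀ : t₀ ∈ Icc 0 T := (hK hp₀).2
  obtain ⟨hx₀K, ht₀K⟩ : x₀ ∈ Icc R⁻¹ R ∧ t₀ ∈ Icc t T := hp₀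
  have hw₀ : w (x₀, t₀) ≤ 0 := by
    rcases ht₀K.2.eq_or_lt with rfl | ht₀T
    · simp only [w, sub_self, mul_zero, exp_zero, one_mul]
      linarith [hterm x₀ hx₀, mul_pos hε (powerBarrier_pos (k + 1) hx₀)]
    by_cases hint : x₀ ∈ Ioo R⁻¹ R
    · exact absurd (hmax.on_subset (prod_mono_right (Icc_subset_Icc_left ht₀K.1)))
        (hpde.not_isMaxOn_sub_barrier hL hε (inv_pos.2 (by linarith)).le hint
          (ht.trans_le ht₀K.1) ht₀T)
    have hR : max x₀ x₀⁻¹ = R := by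
      rcases eq_endpoints_or_mem_Ioo_of_mem_Icc hx₀K with h | h | h
      · rw [h, inv_inv, max_eq_right (inv_le_one_of_one_le₀ hR1.le |>.trans hR1.le)]
      · rw [h, max_eq_left (inv_le_one_of_one_le₀ hR1.le |>.trans hR1.le)]
      · exact absurd h hint
    exact sub_nonpos.2 <| le_barrier_of_abs_le k hx₀ hD hL₀ ht₀.2 (hR ▸ hDR) (hgrowth x₀ t₀ hx₀ ht₀)
  exact sub_nonpos.1 ((hmax hxK).trans hw₀)

theorem SolvesRiskSubjPDE.nonpos_of_terminal_nonpos_of_rate_zero {ζ σ T D x t : ℝ} {k : ℕ}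
    {u : ℝ → ℝ → ℝ} (hpde : SolvesRiskSubjPDE 0 ζ σ T u)
    (hcont : ContinuousOn (fun p : ℝ × ℝ => u p.1 p.2) (Ioi 0 ×ˢ Icc 0 T))
    (hterm : ∀ x, 0 < x → u x T ≤ 0)
    (hgrowth : ∀ x t, 0 < x → t ∈ Icc 0 T → |u x t| ≤ D * (1 + x ^ k + x⁻¹ ^ k))
    (hx : 0 < x) (ht : 0 < t) (htT : t ≤ T) : u x t ≤ 0 := by
  have hD : 0 ≤ D :=
    nonneg_of_mul_nonneg_left ((abs_nonneg _).trans (hgrowth x t hx ⟨ht.le, htT⟩)) (by positivity)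
  set c := exp ((1 / 2 * σ ^ 2 * ↑(k + 1) * (↑(k + 1) + 1) + |ζ| * ↑(k + 1) + 1) * (T - t)) *
    powerBarrier (k + 1) x
  have hc : 0 < c := mul_pos (exp_pos _) (powerBarrier_pos _ hx)
  refine le_of_forall_pos_le_add fun δ hδ => ?_
  have hδc := hpde.le_barrier_of_terminal_nonpos hcont hterm hgrowth hD le_rfl (div_pos hδ hc)
    hx ht htT
  rw [div_mul_cancel₀ δ hc.ne'] at hδc
  linarith

theorem SolvesRiskSubjPDE.nonpos_of_terminal_nonpos {ν ζ σ T D x t : ℝ} {k : ℕ}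
    {u : ℝ → ℝ → ℝ} (hpde : SolvesRiskSubjPDE ν ζ σ T u)
    (hcont : ContinuousOn (fun p : ℝ × ℝ => u p.1 p.2) (Ioi 0 ×ˢ Icc 0 T))
    (hterm : ∀ x, 0 < x → u x T ≤ 0)
    (hgrowth : ∀ x t, 0 < x → t ∈ Icc 0 T → |u x t| ≤ D * (1 + x ^ k + x⁻¹ ^ k))
    (hx : 0 < x) (ht : t ∈ Icc 0 T) : u x t ≤ 0 := by
  have hdisc_cont : ContinuousOn (fun p : ℝ × ℝ => exp (ν * (T - p.2)) * u p.1 p.2)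
      (Ioi 0 ×ˢ Icc 0 T) :=
    (by fun_prop : Continuous fun p : ℝ × ℝ => exp (ν * (T - p.2))).continuousOn.mul hcont
  have hdisc_growth : ∀ x t, 0 < x → t ∈ Icc 0 T →
      |exp (ν * (T - t)) * u x t| ≤ exp (|ν| * T) * D * (1 + x ^ k + x⁻¹ ^ k) := by
    intro y s hy hs
    have hexp : exp (ν * (T - s)) ≤ exp (|ν| * T) := exp_le_exp.2 <| by
      nlinarith [le_abs_self ν, abs_nonneg ν, hs.1, hs.2]
    rw [abs_mul, abs_of_pos (exp_pos _), mul_assoc]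
    exact mul_le_mul hexp (hgrowth y s hy hs) (abs_nonneg _) (exp_pos _).le
  have hnonpos : ∀ s ∈ Ioc 0 T, u x s ≤ 0 := fun s hs =>
    nonpos_of_mul_nonpos_right (hpde.discount.nonpos_of_terminal_nonpos_of_rate_zero
      hdisc_cont (fun y hy => by simpa using hterm y hy) hdisc_growth hx hs.1 hs.2) (exp_pos _)
  rcases ht.1.eq_or_lt with rfl | ht₀
  · rcases ht.2.eq_or_lt with hT | hT
    · exact hT ▸ hterm x hx
    have hcont_x : ContinuousWithinAt (fun s => u x s) (Ioc 0 T) 0 :=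
      (hcont (x, 0) ⟨hx, ht⟩).comp
        (by fun_prop : Continuous fun s : ℝ => (x, s)).continuousWithinAt
        fun s hs => ⟨hx, Ioc_subset_Icc_self hs⟩
    exact ContinuousWithinAt.closure_le (by rw [closure_Ioc hT.ne]; exact ⟨le_rfl, hT.le⟩)
      hcont_x continuousWithinAt_const hnonpos
  · exact hnonpos t ⟨ht₀, ht.2⟩

theorem SolvesRiskSubjPDE.le_of_terminal_le {ν ζ σ T C x t : ℝ} {k : ℕ}
    {W₁ W₂ : ℝ → ℝ → ℝ} (hW₁pde : SolvesRiskSubjPDE ν ζ σ T W₁)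
    (hW₂pde : SolvesRiskSubjPDE ν ζ σ T W₂)
    (hW₁cont : ContinuousOn (fun p : ℝ × ℝ => W₁ p.1 p.2) (Ioi 0 ×ˢ Icc 0 T))
    (hW₂cont : ContinuousOn (fun p : ℝ × ℝ => W₂ p.1 p.2) (Ioi 0 ×ˢ Icc 0 T))
    (hterm : ∀ x, 0 < x → W₁ x T ≤ W₂ x T)
    (hW₁growth : ∀ x t, 0 < x → t ∈ Icc 0 T → |W₁ x t| ≤ C * (1 + x ^ k + x⁻¹ ^ k))
    (hW₂growth : ∀ x t, 0 < x → t ∈ Icc 0 T → |W₂ x t| ≤ C * (1 + x ^ k + x⁻¹ ^ k))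
    (hx : 0 < x) (ht : t ∈ Icc 0 T) : W₁ x t ≤ W₂ x t := by
  have hgrowth : ∀ x t, 0 < x → t ∈ Icc 0 T →
      |W₁ x t - W₂ x t| ≤ 2 * C * (1 + x ^ k + x⁻¹ ^ k) := fun y s hy hs => by
    linarith [abs_sub (W₁ y s) (W₂ y s), hW₁growth y s hy hs, hW₂growth y s hy hs]
  exact sub_nonpos.1 <| (hW₁pde.sub hW₂pde).nonpos_of_terminal_nonpos (hW₁cont.sub hW₂cont)
    (fun y hy => sub_nonpos.2 (hterm y hy)) hgrowth hx ht

theorem risk_subjective_PDE_uniqueness_general (ν ζ σ T : ℝ)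
    (h : ℝ → ℝ) (W₁ W₂ : ℝ → ℝ → ℝ)
    (hW₁cont : ContinuousOn (fun p : ℝ × ℝ => W₁ p.1 p.2) (Ioi 0 ×ˢ Icc 0 T))
    (hW₂cont : ContinuousOn (fun p : ℝ × ℝ => W₂ p.1 p.2) (Ioi 0 ×ˢ Icc 0 T))
    (hW₁pde : SolvesRiskSubjPDE ν ζ σ T W₁)
    (hW₂pde : SolvesRiskSubjPDE ν ζ σ T W₂)
    (hW₁term : ∀ x : ℝ, 0 < x → W₁ x T = h x)
    (hW₂term : ∀ x : ℝ, 0 < x → W₂ x T = h x)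
    (C : ℝ) (k : ℕ)
    (hW₁growth : ∀ x t : ℝ, 0 < x → t ∈ Icc 0 T →
      |W₁ x t| ≤ C * (1 + x ^ k + x⁻¹ ^ k))
    (hW₂growth : ∀ x t : ℝ, 0 < x → t ∈ Icc 0 T →
      |W₂ x t| ≤ C * (1 + x ^ k + x⁻¹ ^ k)) :
    ∀ x t : ℝ, 0 < x → t ∈ Icc 0 T → W₁ x t = W₂ x t := by
  have hterm : ∀ x, 0 < x → W₁ x T = W₂ x T := fun x hx => (hW₁term x hx).trans (hW₂term x hx).symm
  intro x t hx ht
  exact le_antisymm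
    (hW₁pde.le_of_terminal_le hW₂pde hW₁cont hW₂cont (fun y hy => (hterm y hy).le)
      hW₁growth hW₂growth hx ht)
    (hW₂pde.le_of_terminal_le hW₁pde hW₂cont hW₁cont (fun y hy => (hterm y hy).ge)
      hW₂growth hW₁growth hx ht)

theorem risk_subjective_PDE_uniqueness (ν ζ σ T : ℝ) (hσ : 0 < σ) (hT : 0 < T)
    (h : ℝ → ℝ) (hcont : Continuous h) (W₁ W₂ : ℝ → ℝ → ℝ)
    (hW₁cont : ContinuousOn (fun p : ℝ × ℝ => W₁ p.1 p.2) (Ioi 0 ×ˢ Icc 0 T))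
    (hW₂cont : ContinuousOn (fun p : ℝ × ℝ => W₂ p.1 p.2) (Ioi 0 ×ˢ Icc 0 T))
    (hW₁pde : SolvesRiskSubjPDE ν ζ σ T W₁)
    (hW₂pde : SolvesRiskSubjPDE ν ζ σ T W₂)
    (hW₁term : ∀ x : ℝ, 0 < x → W₁ x T = h x)
    (hW₂term : ∀ x : ℝ, 0 < x → W₂ x T = h x)
    (C : ℝ) (hC : 0 < C) (k : ℕ)
    (hW₁growth : ∀ x t : ℝ, 0 < x → t ∈ Icc 0 T →
      |W₁ x t| ≤ C * (1 + x ^ k + x⁻¹ ^ k))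
    (hW₂growth : ∀ x t : ℝ, 0 < x → t ∈ Icc 0 T →
      |W₂ x t| ≤ C * (1 + x ^ k + x⁻¹ ^ k)) :
    ∀ x t : ℝ, 0 < x → t ∈ Icc 0 T → W₁ x t = W₂ x t :=
  risk_subjective_PDE_uniqueness_general ν ζ σ T h W₁ W₂ hW₁cont hW₂cont hW₁pde hW₂pde hW₁term
    hW₂term C k hW₁growth hW₂growth
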